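/- Let X, Y be Banach spaces, T ∈ B(X,Y) with bounded generalized inverse T⁺, and δT ∈ B(X,Y) with ‖δT‖‖T⁺‖ < 1 and R(δT) ⊆ R(T). Then (T + δT) T⁺ (I + δT T⁺)⁻¹ = T T⁺. -/

import Mathlib

open ContinuousLinearMap

/-! Since `R(δT) ⊆ R(T)` and `T T⁺` fixes `R(T)`, we get `T T⁺ δT = δT`, hence
`(T + δT) T⁺ = T T⁺ (I + δT T⁺)`; cancelling the invertible factor `I + δT T⁺` gives the claim. -/

namespace ContinuousLinearMap

section Semiring

variable {R : Type*} [Semiring R] {X Y Z : Type*}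
  [TopologicalSpace X] [AddCommMonoid X] [Module R X]
  [TopologicalSpace Y] [AddCommMonoid Y] [Module R Y]
  [TopologicalSpace Z] [AddCommMonoid Z] [Module R Z]

theorem comp_comp_eq_of_range_le {T : X →L[R] Y} {T' : Y →L[R] X} {S : Z →L[R] Y}
    (hT : T ∘L T' ∘L T = T) (hS : LinearMap.range (S : Z →ₗ[R] Y) ≤ LinearMap.range (T : X →ₗ[R] Y)) :
    T ∘L T' ∘L S = S := by
  ext z
  obtain ⟨x, hx⟩ := hS (LinearMap.mem_range_self (S : Z →ₗ[R] Y) z)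
  have hx : T x = S z := hx
  simpa [hx] using congr($hT x)

end Semiring

theorem isUnit_one_add_comp {𝕜 X Y : Type*} [NontriviallyNormedField 𝕜]
    [NormedAddCommGroup X] [NormedSpace 𝕜 X] [NormedAddCommGroup Y] [NormedSpace 𝕜 Y]
    [CompleteSpace Y] (A : X →L[𝕜] Y) (B : Y →L[𝕜] X) (h : ‖A‖ * ‖B‖ < 1) :
    IsUnit (1 + A ∘L B) := by
  have hAB : ‖-(A ∘L B)‖ < 1 := by
    rw [norm_neg]
    exact (opNorm_comp_le A B).trans_lt h
  simpa using isUnit_one_sub_of_norm_lt_one hAB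

end ContinuousLinearMap

theorem perturbed_range_projection_general
    {X Y : Type*} [NormedAddCommGroup X] [NormedSpace ℝ X]
    [NormedAddCommGroup Y] [NormedSpace ℝ Y] [CompleteSpace Y]
    (T : X →L[ℝ] Y) (T' : Y →L[ℝ] X) (δT : X →L[ℝ] Y)
    (h1 : T ∘L T' ∘L T = T)
    (hsmall : ‖δT‖ * ‖T'‖ < 1)
    (hran : LinearMap.range (δT : X →ₗ[ℝ] Y) ≤ LinearMap.range (T : X →ₗ[ℝ] Y)) :
    (T + δT) ∘L T' ∘L Ring.inverse (1 + δT ∘L T') = T ∘L T' := by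
  have hfix : T ∘L T' ∘L δT = δT := comp_comp_eq_of_range_le h1 hran
  have hfactor : (T + δT) ∘L T' = (T ∘L T') * (1 + δT ∘L T') := by
    rw [mul_one_add, mul_def, ← comp_assoc, comp_assoc T, hfix, add_comp]
  rw [← comp_assoc, hfactor, ← mul_def,
    Ring.mul_inverse_cancel_right _ _ (isUnit_one_add_comp δT T' hsmall)]

/-- If `T⁺` is a bounded generalized inverse of `T`, `‖δT‖‖T⁺‖ < 1` and
`R(δT) ⊆ R(T)`, then `(T + δT) T⁺ (I + δT T⁺)⁻¹ = T T⁺`. -/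
theorem perturbed_range_projection
    {X Y : Type*} [NormedAddCommGroup X] [NormedSpace ℝ X] [CompleteSpace X]
    [NormedAddCommGroup Y] [NormedSpace ℝ Y] [CompleteSpace Y]
    (T : X →L[ℝ] Y) (T' : Y →L[ℝ] X) (δT : X →L[ℝ] Y)
    (h1 : T ∘L T' ∘L T = T) (h2 : T' ∘L T ∘L T' = T')
    (hsmall : ‖δT‖ * ‖T'‖ < 1)
    (hran : LinearMap.range (δT : X →ₗ[ℝ] Y) ≤ LinearMap.range (T : X →ₗ[ℝ] Y)) :
    (T + δT) ∘L T' ∘L Ring.inverse (1 + δT ∘L T') = T ∘L T' :=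
  perturbed_range_projection_general T T' δT h1 hsmall hran
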